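/- arXiv:1505.02607 — 4 statements merged into one kernel-verified Lean document; each statement's English description precedes it below -/
import Mathlib

section
/- Fix τ > 0, a positive integer n, real sequences (μ_{P,i})_{i=1}^n and (μ_{Q,i})_{i=1}^n, and observations x_1, …, x_n ∈ ℝ. With common conditional standard deviation τ for both models, the cumulative prequential delta Hyvärinen score is strictly positive if and only if the cumulative prequential delta log-score is strictly positive: Σ_{i=1}^n [S_H(x_i; μ_{Q,i}, τ) − S_H(x_i; μ_{P,i}, τ)] > 0 ⟺ Σ_{i=1}^n [S_L(x_i; μ_{Q,i}, τ) − S_L(x_i; μ_{P,i}, τ)] > 0. In particular, the model-selection rule that selects the model with the lower cumulative prequential score yields the same decision under the two scoring rules. -/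
/-- Log-score of an observation x under N(μ, σ²). -/
noncomputable def logScore (x μ σ : ℝ) : ℝ :=
  (1 / 2) * Real.log (2 * Real.pi * σ ^ 2) + (x - μ) ^ 2 / (2 * σ ^ 2)

/-- Hyvärinen score of an observation x under N(μ, σ²). -/
noncomputable def hyvScore (x μ σ : ℝ) : ℝ :=
  -2 / σ ^ 2 + (x - μ) ^ 2 / σ ^ 4

theorem hyvScore_sub_hyvScore (x μ₁ μ₂ σ : ℝ) :
    hyvScore x μ₂ σ - hyvScore x μ₁ σ = 2 / σ ^ 2 * (logScore x μ₂ σ - logScore x μ₁ σ) := by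
  simp only [hyvScore, logScore]
  ring

theorem sum_hyvScore_sub_hyvScore {ι : Type*} (s : Finset ι) (σ : ℝ) (x μ₁ μ₂ : ι → ℝ) :
    ∑ i ∈ s, (hyvScore (x i) (μ₂ i) σ - hyvScore (x i) (μ₁ i) σ) =
      2 / σ ^ 2 * ∑ i ∈ s, (logScore (x i) (μ₂ i) σ - logScore (x i) (μ₁ i) σ) := by
  simp only [Finset.mul_sum, hyvScore_sub_hyvScore]

theorem cumulative_delta_hyv_pos_iff_delta_log_pos_equal_var_general
    (τ : ℝ) (hτ : 0 < τ) (n : ℕ) (μP μQ x : ℕ → ℝ) :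
    0 < ∑ i ∈ Finset.Icc 1 n, (hyvScore (x i) (μQ i) τ - hyvScore (x i) (μP i) τ) ↔
      0 < ∑ i ∈ Finset.Icc 1 n, (logScore (x i) (μQ i) τ - logScore (x i) (μP i) τ) := by
  rw [sum_hyvScore_sub_hyvScore]
  exact mul_pos_iff_of_pos_left (by positivity)

theorem cumulative_delta_hyv_pos_iff_delta_log_pos_equal_var
    (τ : ℝ) (hτ : 0 < τ) (n : ℕ) (hn : 0 < n) (μP μQ x : ℕ → ℝ) :
    0 < ∑ i ∈ Finset.Icc 1 n, (hyvScore (x i) (μQ i) τ - hyvScore (x i) (μP i) τ) ↔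
      0 < ∑ i ∈ Finset.Icc 1 n, (logScore (x i) (μQ i) τ - logScore (x i) (μP i) τ) :=
  cumulative_delta_hyv_pos_iff_delta_log_pos_equal_var_general τ hτ n μP μQ x
end

section
/- Let μ ∈ ℝ and let τ_P, τ_Q > 0 with τ_P ≠ τ_Q. Set b = 2·(1/τ_P² + 1/τ_Q²) and a = 2·(1/τ_P² − 1/τ_Q²) − (1/τ_P² + 1/τ_Q²)·log(τ_Q²/τ_P²). Then for every x ∈ ℝ, the per-observation delta Hyvärinen score is an affine function of the per-observation delta log-score: S_H(x; μ, τ_Q) − S_H(x; μ, τ_P) = b·(S_L(x; μ, τ_Q) − S_L(x; μ, τ_P)) + a. -/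
/-! In terms of the precisions `p = 1/τ_P²`, `q = 1/τ_Q²` and `d = (x - μ)²`, both deltas are affine
in `d`: the log-score delta has slope `(q - p)/2`, the Hyvärinen delta has slope
`q² - p² = (p + q)(q - p)`. Their ratio `2(p + q)` is the coefficient `b`, and matching the
constant terms gives `a`. -/

theorem logScore_sub_logScore (x μ : ℝ) {σ₁ σ₂ : ℝ} (h₁ : σ₁ ≠ 0) (h₂ : σ₂ ≠ 0) :
    logScore x μ σ₂ - logScore x μ σ₁ =
      (1 / 2) * Real.log (σ₂ ^ 2 / σ₁ ^ 2) + (x - μ) ^ 2 / 2 * (1 / σ₂ ^ 2 - 1 / σ₁ ^ 2) := by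
  have h2π : 2 * Real.pi ≠ 0 := by positivity
  rw [logScore, logScore, Real.log_mul h2π (pow_ne_zero 2 h₂), Real.log_mul h2π (pow_ne_zero 2 h₁),
    Real.log_div (pow_ne_zero 2 h₂) (pow_ne_zero 2 h₁)]
  ring

theorem hyvScore_sub_hyvScore_s7 (x μ σ₁ σ₂ : ℝ) :
    hyvScore x μ σ₂ - hyvScore x μ σ₁ =
      -2 * (1 / σ₂ ^ 2 - 1 / σ₁ ^ 2) +
        (x - μ) ^ 2 * ((1 / σ₁ ^ 2 + 1 / σ₂ ^ 2) * (1 / σ₂ ^ 2 - 1 / σ₁ ^ 2)) := by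
  rw [hyvScore, hyvScore]
  ring

theorem delta_hyv_affine_delta_log_equal_mean_general
    (μ τP τQ : ℝ) (hP : 0 < τP) (hQ : 0 < τQ) (x : ℝ) :
    hyvScore x μ τQ - hyvScore x μ τP =
      (2 * (1 / τP ^ 2 + 1 / τQ ^ 2)) * (logScore x μ τQ - logScore x μ τP) +
        (2 * (1 / τP ^ 2 - 1 / τQ ^ 2)
          - (1 / τP ^ 2 + 1 / τQ ^ 2) * Real.log (τQ ^ 2 / τP ^ 2)) := by
  rw [hyvScore_sub_hyvScore_s7, logScore_sub_logScore x μ hP.ne' hQ.ne']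
  ring

theorem delta_hyv_affine_delta_log_equal_mean
    (μ τP τQ : ℝ) (hP : 0 < τP) (hQ : 0 < τQ) (hne : τP ≠ τQ) (x : ℝ) :
    hyvScore x μ τQ - hyvScore x μ τP =
      (2 * (1 / τP ^ 2 + 1 / τQ ^ 2)) * (logScore x μ τQ - logScore x μ τP) +
        (2 * (1 / τP ^ 2 - 1 / τQ ^ 2)
          - (1 / τP ^ 2 + 1 / τQ ^ 2) * Real.log (τQ ^ 2 / τP ^ 2)) :=
  delta_hyv_affine_delta_log_equal_mean_general μ τP τQ hP hQ x
end

section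
/- Let τ_P, τ_Q > 0 with τ_P ≠ τ_Q, let n be a positive integer, let (μ_i)_{i=1}^n be a real sequence, and let x_1, …, x_n ∈ ℝ. Set b = 2·(1/τ_P² + 1/τ_Q²) and a = 2·(1/τ_P² − 1/τ_Q²) − (1/τ_P² + 1/τ_Q²)·log(τ_Q²/τ_P²). Then b > 0, and the zero cut-off for the cumulative prequential delta Hyvärinen score corresponds to a shifted cut-off for the cumulative prequential delta log-score: Σ_{i=1}^n [S_H(x_i; μ_i, τ_Q) − S_H(x_i; μ_i, τ_P)] > 0 ⟺ Σ_{i=1}^n [S_L(x_i; μ_i, τ_Q) − S_L(x_i; μ_i, τ_P)] > −n·a/b. -/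
open Finset Real

theorem logScore_sub_logScore_s9 (x μ σ τ : ℝ) (hσ : σ ≠ 0) (hτ : τ ≠ 0) :
    logScore x μ σ - logScore x μ τ =
      1 / 2 * log (σ ^ 2 / τ ^ 2) + (x - μ) ^ 2 * (1 / (2 * σ ^ 2) - 1 / (2 * τ ^ 2)) := by
  have h2π : 2 * π ≠ 0 := by positivity
  rw [logScore, logScore, log_mul h2π (pow_ne_zero 2 hσ), log_mul h2π (pow_ne_zero 2 hτ),
    log_div (pow_ne_zero 2 hσ) (pow_ne_zero 2 hτ)]
  ring

theorem hyvScore_sub_hyvScore_eq_affine_logScore_sub (x μ τP τQ : ℝ) (hP : τP ≠ 0)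
    (hQ : τQ ≠ 0) :
    hyvScore x μ τQ - hyvScore x μ τP =
      2 * (1 / τP ^ 2 + 1 / τQ ^ 2) * (logScore x μ τQ - logScore x μ τP) +
        (2 * (1 / τP ^ 2 - 1 / τQ ^ 2)
          - (1 / τP ^ 2 + 1 / τQ ^ 2) * log (τQ ^ 2 / τP ^ 2)) := by
  rw [logScore_sub_logScore_s9 x μ τQ τP hQ hP, hyvScore, hyvScore]
  field_simp
  ring

theorem sum_hyvScore_sub_eq_affine_sum_logScore_sub {ι : Type*} (s : Finset ι) (x μ : ι → ℝ)
    (τP τQ : ℝ) (hP : τP ≠ 0) (hQ : τQ ≠ 0) :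
    ∑ i ∈ s, (hyvScore (x i) (μ i) τQ - hyvScore (x i) (μ i) τP) =
      2 * (1 / τP ^ 2 + 1 / τQ ^ 2) *
          ∑ i ∈ s, (logScore (x i) (μ i) τQ - logScore (x i) (μ i) τP) +
        #s * (2 * (1 / τP ^ 2 - 1 / τQ ^ 2)
          - (1 / τP ^ 2 + 1 / τQ ^ 2) * log (τQ ^ 2 / τP ^ 2)) := by
  simp only [hyvScore_sub_hyvScore_eq_affine_logScore_sub _ _ _ _ hP hQ, sum_add_distrib,
    ← mul_sum, sum_const, nsmul_eq_mul]

theorem cumulative_delta_hyv_pos_iff_shifted_cutoff_general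
    (τP τQ : ℝ) (hP : 0 < τP) (hQ : 0 < τQ)
    (n : ℕ) (μ x : ℕ → ℝ) :
    0 < 2 * (1 / τP ^ 2 + 1 / τQ ^ 2) ∧
    (0 < ∑ i ∈ Finset.Icc 1 n, (hyvScore (x i) (μ i) τQ - hyvScore (x i) (μ i) τP) ↔
      -(n * (2 * (1 / τP ^ 2 - 1 / τQ ^ 2)
          - (1 / τP ^ 2 + 1 / τQ ^ 2) * Real.log (τQ ^ 2 / τP ^ 2)))
        / (2 * (1 / τP ^ 2 + 1 / τQ ^ 2)) <
      ∑ i ∈ Finset.Icc 1 n, (logScore (x i) (μ i) τQ - logScore (x i) (μ i) τP)) := by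
  have hb : 0 < 2 * (1 / τP ^ 2 + 1 / τQ ^ 2) := by positivity
  refine ⟨hb, ?_⟩
  rw [sum_hyvScore_sub_eq_affine_sum_logScore_sub _ _ _ _ _ hP.ne' hQ.ne', Nat.card_Icc,
    Nat.add_sub_cancel, div_lt_iff₀ hb]
  constructor <;> intro h <;> linarith

theorem cumulative_delta_hyv_pos_iff_shifted_cutoff
    (τP τQ : ℝ) (hP : 0 < τP) (hQ : 0 < τQ) (hne : τP ≠ τQ)
    (n : ℕ) (hn : 0 < n) (μ x : ℕ → ℝ) :
    0 < 2 * (1 / τP ^ 2 + 1 / τQ ^ 2) ∧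
    (0 < ∑ i ∈ Finset.Icc 1 n, (hyvScore (x i) (μ i) τQ - hyvScore (x i) (μ i) τP) ↔
      -(n * (2 * (1 / τP ^ 2 - 1 / τQ ^ 2)
          - (1 / τP ^ 2 + 1 / τQ ^ 2) * Real.log (τQ ^ 2 / τP ^ 2)))
        / (2 * (1 / τP ^ 2 + 1 / τQ ^ 2)) <
      ∑ i ∈ Finset.Icc 1 n, (logScore (x i) (μ i) τQ - logScore (x i) (μ i) τP)) :=
  cumulative_delta_hyv_pos_iff_shifted_cutoff_general τP τQ hP hQ n μ x
end

section
/- Let μ_P, μ_Q ∈ ℝ with μ_P ≠ μ_Q, and let σ_P, σ_Q > 0 with σ_P ≠ σ_Q. Then the per-observation delta Hyvärinen score is NOT an affine function of the per-observation delta log-score: there exist no real constants a, b such that for all x ∈ ℝ, S_H(x; μ_Q, σ_Q) − S_H(x; μ_P, σ_P) = b·(S_L(x; μ_Q, σ_Q) − S_L(x; μ_P, σ_P)) + a. -/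
/-!
Both score differences are quadratic polynomials in `x`. Writing `p = σP⁻²` and `q = σQ⁻²` for the
precisions, the `x²`-coefficients are `q² - p²` and `(q - p) / 2`, so `p ≠ q` forces `b = 2 (p + q)`;
with this `b` the `x`-coefficients differ by a nonzero multiple of `p q (μQ - μP)`.
-/

open Real

lemma coeffs_eq_zero_of_forall_quadratic_eq_zero {A B C : ℝ}
    (h : ∀ x : ℝ, A * x ^ 2 + B * x + C = 0) : A = 0 ∧ B = 0 := by
  have h₀ := h 0
  have h₁ := h 1
  have hm₁ := h (-1)
  norm_num at h₀ h₁ hm₁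
  constructor <;> linarith

lemma hyvScore_eq (x μ σ : ℝ) :
    hyvScore x μ σ = (σ ^ 2)⁻¹ ^ 2 * (x - μ) ^ 2 - 2 * (σ ^ 2)⁻¹ := by
  unfold hyvScore
  ring

lemma logScore_eq (x μ σ : ℝ) :
    logScore x μ σ = (σ ^ 2)⁻¹ / 2 * (x - μ) ^ 2 + log (2 * π * σ ^ 2) / 2 := by
  unfold logScore
  ring

lemma not_affine_sq_weighted_sub_weighted {p q μP μQ : ℝ} (hp : p ≠ 0) (hq : q ≠ 0)
    (hpq : p ≠ q) (hμ : μP ≠ μQ) :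
    ¬ ∃ a b : ℝ, ∀ x : ℝ, q ^ 2 * (x - μQ) ^ 2 - p ^ 2 * (x - μP) ^ 2 =
      b * (q * (x - μQ) ^ 2 - p * (x - μP) ^ 2) + a := by
  rintro ⟨a, b, h⟩
  obtain ⟨hA, hB⟩ := coeffs_eq_zero_of_forall_quadratic_eq_zero
    (A := q ^ 2 - p ^ 2 - b * (q - p))
    (B := -2 * (q ^ 2 * μQ - p ^ 2 * μP) + 2 * b * (q * μQ - p * μP))
    (C := q ^ 2 * μQ ^ 2 - p ^ 2 * μP ^ 2 - b * (q * μQ ^ 2 - p * μP ^ 2) - a)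
    fun x => by linear_combination h x
  have hb : b = p + q := by
    have : (q - p) * (p + q - b) = 0 := by linear_combination hA
    rcases mul_eq_zero.mp this with h | h
    · exact absurd (sub_eq_zero.mp h).symm hpq
    · linarith
  have : p * q * (μQ - μP) = 0 := by linear_combination hB / 2 - (q * μQ - p * μP) * hb
  exact mul_ne_zero (mul_ne_zero hp hq) (sub_ne_zero.mpr hμ.symm) this

theorem delta_hyv_not_affine_delta_log
    (μP μQ σP σQ : ℝ) (hμ : μP ≠ μQ) (hP : 0 < σP) (hQ : 0 < σQ) (hσ : σP ≠ σQ) :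
    ¬ ∃ a b : ℝ, ∀ x : ℝ,
        hyvScore x μQ σQ - hyvScore x μP σP =
          b * (logScore x μQ σQ - logScore x μP σP) + a := by
  rintro ⟨a, b, h⟩
  have hprec : (σP ^ 2)⁻¹ ≠ (σQ ^ 2)⁻¹ := by
    rw [Ne, inv_inj, pow_left_inj₀ hP.le hQ.le two_ne_zero]
    exact hσ
  refine not_affine_sq_weighted_sub_weighted (by positivity) (by positivity) hprec hμ
    ⟨a + 2 * (σQ ^ 2)⁻¹ - 2 * (σP ^ 2)⁻¹
      + b * (log (2 * π * σQ ^ 2) - log (2 * π * σP ^ 2)) / 2, b / 2, fun x => ?_⟩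
  have hx := h x
  rw [hyvScore_eq, hyvScore_eq, logScore_eq, logScore_eq] at hx
  linear_combination hx
end
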